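/- Let X, Y be Hermitian positive definite matrices with unit trace. If e_k(λ(X)) ≤ e_k(λ(Y)) for k = 1,…,n, then for α ∈ (0,1), tr(X^α) ≤ tr(Y^α). -/

import Mathlib

/-!
For `0 < α < 1` and `t ≥ 0`, substituting `s ↦ t s` gives
`∫₀^∞ s^(α-1) log (1 + t / s) ds = c t^α` with `c = π / (α sin πα) > 0`.
Summing over the eigenvalues,
`c ∑ᵢ λᵢ^α = ∫₀^∞ s^(α-1) log (∏ᵢ (λᵢ + s) / sⁿ) ds`,
and `∏ᵢ (λᵢ + s) = ∑ₖ eₖ(λ) s^(n-k)` is monotone in the `eₖ` for `s ≥ 0`,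
so the hypotheses compare the integrands pointwise.
-/

open Finset Real Matrix
open scoped ComplexOrder

noncomputable def esymm (n k : ℕ) (x : Fin n → ℝ) : ℝ :=
  ∑ s ∈ Finset.powersetCard k (Finset.univ : Finset (Fin n)), ∏ i ∈ s, x i

lemma esymm_zero (n : ℕ) (x : Fin n → ℝ) : esymm n 0 x = 1 := by
  rw [esymm, powersetCard_zero, sum_singleton, prod_empty]

lemma prod_add_eq_sum_esymm_mul_pow (n : ℕ) (x : Fin n → ℝ) (s : ℝ) :
    ∏ i, (x i + s) = ∑ k ∈ range (n + 1), esymm n k x * s ^ (n - k) := by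
  have hcard : ∀ t ∈ (univ : Finset (Fin n)).powerset, t.card ∈ range (n + 1) := fun t _ =>
    mem_range.mpr (Nat.lt_succ_of_le ((card_le_univ t).trans_eq (Fintype.card_fin n)))
  rw [prod_add, ← sum_fiberwise_of_maps_to hcard]
  refine sum_congr rfl fun k _ => ?_
  rw [esymm, sum_mul, ← powersetCard_eq_filter]
  refine sum_congr rfl fun t ht => ?_
  rw [mem_powersetCard] at ht
  rw [prod_const, card_sdiff_of_subset ht.1, card_univ, Fintype.card_fin, ht.2]

lemma prod_add_le_prod_add_of_esymm_le {n : ℕ} {x y : Fin n → ℝ}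
    (h : ∀ k, 1 ≤ k → k ≤ n → esymm n k x ≤ esymm n k y) {s : ℝ} (hs : 0 ≤ s) :
    ∏ i, (x i + s) ≤ ∏ i, (y i + s) := by
  rw [prod_add_eq_sum_esymm_mul_pow, prod_add_eq_sum_esymm_mul_pow]
  refine sum_le_sum fun k hk => ?_
  rcases Nat.eq_zero_or_pos k with rfl | hk0
  · rw [esymm_zero, esymm_zero]
  · exact mul_le_mul_of_nonneg_right (h k hk0 (Nat.lt_succ_iff.mp (mem_range.mp hk)))
      (pow_nonneg hs _)

section LogKernel

open MeasureTheory Set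

variable {α t : ℝ}

lemma continuousOn_rpow_mul_log_one_add_div (ht : 0 ≤ t) :
    ContinuousOn (fun s : ℝ => s ^ (α - 1) * log (1 + t / s)) (Ioi 0) := by
  refine ContinuousOn.mul (fun s hs => (continuousAt_rpow_const s _
    (Or.inl (ne_of_gt hs))).continuousWithinAt) (ContinuousOn.log ?_ fun s hs => ?_)
  · exact continuousOn_const.add (continuousOn_const.div continuousOn_id fun s hs => ne_of_gt hs)
  · have : 0 ≤ t / s := div_nonneg ht (le_of_lt hs)
    positivity

lemma rpow_mul_log_one_add_div_nonneg (ht : 0 ≤ t) {s : ℝ} (hs : 0 < s) :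
    0 ≤ s ^ (α - 1) * log (1 + t / s) :=
  mul_nonneg (rpow_nonneg hs.le _) (log_nonneg (le_add_of_nonneg_right (by positivity)))

lemma rpow_mul_log_one_add_div_le_of_le_one (hα : 0 < α) (ht : 0 ≤ t) {s : ℝ} (hs : 0 < s)
    (hs1 : s ≤ 1) :
    s ^ (α - 1) * log (1 + t / s) ≤ (1 + t) ^ (α / 2) / (α / 2) * s ^ (α / 2 - 1) := by
  have hle : 1 + t / s ≤ (1 + t) / s := by
    rw [add_div]
    gcongr
    exact one_le_one_div hs hs1
  calc s ^ (α - 1) * log (1 + t / s)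
      ≤ s ^ (α - 1) * (((1 + t) / s) ^ (α / 2) / (α / 2)) := by
        gcongr
        exact (log_le_log (by positivity) hle).trans
          (log_le_rpow_div (by positivity) (by positivity))
    _ = (1 + t) ^ (α / 2) / (α / 2) * s ^ (α / 2 - 1) := by
        rw [div_rpow (by positivity) hs.le, show α / 2 - 1 = α - 1 - α / 2 by ring,
          rpow_sub hs (α - 1) (α / 2)]
        ring

lemma rpow_mul_log_one_add_div_le (ht : 0 ≤ t) {s : ℝ} (hs : 0 < s) :
    s ^ (α - 1) * log (1 + t / s) ≤ t * s ^ (α - 2) := by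
  calc s ^ (α - 1) * log (1 + t / s) ≤ s ^ (α - 1) * (t / s) := by
        gcongr
        linarith [log_le_sub_one_of_pos (show 0 < 1 + t / s by positivity)]
    _ = t * s ^ (α - 2) := by
        rw [show α - 2 = α - 1 - 1 by ring, rpow_sub_one hs.ne' (α - 1)]
        ring

lemma integrableOn_rpow_mul_log_one_add_div (hα : 0 < α) (hα1 : α < 1) (ht : 0 ≤ t) :
    IntegrableOn (fun s : ℝ => s ^ (α - 1) * log (1 + t / s)) (Ioi 0) := by
  have hcont := continuousOn_rpow_mul_log_one_add_div (α := α) ht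
  rw [← Ioc_union_Ioi_eq_Ioi zero_le_one]
  refine IntegrableOn.union ?_ ?_
  · have hdom : IntegrableOn (fun s : ℝ => (1 + t) ^ (α / 2) / (α / 2) * s ^ (α / 2 - 1))
        (Ioc 0 1) :=
      ((intervalIntegral.intervalIntegrable_rpow' (by linarith)).1).const_mul _
    refine hdom.mono' ((hcont.mono Ioc_subset_Ioi_self).aestronglyMeasurable measurableSet_Ioc)
      ((ae_restrict_iff' measurableSet_Ioc).mpr (ae_of_all _ fun s hs => ?_))
    rw [norm_of_nonneg (rpow_mul_log_one_add_div_nonneg ht hs.1)]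
    exact rpow_mul_log_one_add_div_le_of_le_one hα ht hs.1 hs.2
  · have hdom : IntegrableOn (fun s : ℝ => t * s ^ (α - 2)) (Ioi 1) :=
      (integrableOn_Ioi_rpow_of_lt (by linarith) zero_lt_one).const_mul t
    refine hdom.mono' ((hcont.mono (Ioi_subset_Ioi zero_le_one)).aestronglyMeasurable
      measurableSet_Ioi) ((ae_restrict_iff' measurableSet_Ioi).mpr (ae_of_all _ fun s hs => ?_))
    have hs0 : (0 : ℝ) < s := zero_lt_one.trans hs
    rw [norm_of_nonneg (rpow_mul_log_one_add_div_nonneg ht hs0)]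
    exact rpow_mul_log_one_add_div_le ht hs0

noncomputable def logKernelConst (α : ℝ) : ℝ :=
  ∫ s in Ioi 0, s ^ (α - 1) * log (1 + 1 / s)

lemma logKernelConst_pos (hα : 0 < α) (hα1 : α < 1) : 0 < logKernelConst α := by
  have hsupp : Ioi (0 : ℝ) ⊆ Function.support fun s : ℝ => s ^ (α - 1) * log (1 + 1 / s) :=
    fun s (hs : 0 < s) => (mul_pos (rpow_pos_of_pos hs _)
      (log_pos (lt_add_of_pos_right _ (by positivity)))).ne'
  rw [logKernelConst, setIntegral_pos_iff_support_of_nonneg_ae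
    ((ae_restrict_iff' measurableSet_Ioi).mpr
      (ae_of_all _ fun s hs => rpow_mul_log_one_add_div_nonneg zero_le_one hs))
    (integrableOn_rpow_mul_log_one_add_div hα hα1 zero_le_one), inter_eq_right.mpr hsupp]
  simp

lemma integral_rpow_mul_log_one_add_div (hα : 0 < α) (ht : 0 ≤ t) :
    ∫ s in Ioi 0, s ^ (α - 1) * log (1 + t / s) = t ^ α * logKernelConst α := by
  rcases ht.eq_or_lt with rfl | ht
  · simp [zero_rpow hα.ne']
  have hscale := integral_comp_mul_left_Ioi' (fun s : ℝ => s ^ (α - 1) * log (1 + t / s)) 0 ht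
  rw [mul_zero] at hscale
  rw [← hscale, logKernelConst, ← integral_const_mul, smul_eq_mul, ← integral_const_mul]
  refine setIntegral_congr_fun measurableSet_Ioi fun s (hs : 0 < s) => ?_
  rw [mul_rpow ht.le hs.le, div_mul_cancel_left₀ ht.ne', one_div, rpow_sub_one ht.ne' α]
  field_simp

lemma sum_log_one_add_div_le_of_prod_add_le {n : ℕ} {x y : Fin n → ℝ} (hx : ∀ i, 0 ≤ x i)
    (hy : ∀ i, 0 ≤ y i) {s : ℝ} (hs : 0 < s) (h : ∏ i, (x i + s) ≤ ∏ i, (y i + s)) :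
    ∑ i, log (1 + x i / s) ≤ ∑ i, log (1 + y i / s) := by
  have hlog : ∀ z : Fin n → ℝ, (∀ i, 0 ≤ z i) →
      ∑ i, log (1 + z i / s) = log ((∏ i, (z i + s)) / s ^ n) := fun z hz => by
    rw [← log_prod fun i _ => by have := hz i; positivity]
    congr 1
    calc ∏ i, (1 + z i / s) = ∏ i, ((z i + s) / s) :=
          prod_congr rfl fun i _ => by rw [add_div, div_self hs.ne', add_comm]
      _ = (∏ i, (z i + s)) / s ^ n := by
        rw [prod_div_distrib, prod_const, card_univ, Fintype.card_fin]
  rw [hlog x hx, hlog y hy]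
  exact log_le_log (div_pos (prod_pos fun i _ => by linarith [hx i]) (pow_pos hs n))
    (by gcongr)

theorem sum_rpow_le_sum_rpow_of_prod_add_le (hα : 0 < α) (hα1 : α < 1) {n : ℕ}
    {x y : Fin n → ℝ} (hx : ∀ i, 0 ≤ x i) (hy : ∀ i, 0 ≤ y i)
    (h : ∀ s, 0 < s → ∏ i, (x i + s) ≤ ∏ i, (y i + s)) :
    ∑ i, x i ^ α ≤ ∑ i, y i ^ α := by
  have hintegral : ∀ z : Fin n → ℝ, (∀ i, 0 ≤ z i) →
      ∫ s in Ioi 0, ∑ i, s ^ (α - 1) * log (1 + z i / s) =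
        (∑ i, z i ^ α) * logKernelConst α :=
    fun z hz => by
      rw [integral_finsetSum _ fun i _ => integrableOn_rpow_mul_log_one_add_div hα hα1 (hz i),
        sum_mul]
      exact sum_congr rfl fun i _ => integral_rpow_mul_log_one_add_div hα (hz i)
  refine le_of_mul_le_mul_right ?_ (logKernelConst_pos hα hα1)
  rw [← hintegral x hx, ← hintegral y hy]
  refine setIntegral_mono_on
    (integrable_finsetSum _ fun i _ => integrableOn_rpow_mul_log_one_add_div hα hα1 (hx i))
    (integrable_finsetSum _ fun i _ => integrableOn_rpow_mul_log_one_add_div hα hα1 (hy i))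
    measurableSet_Ioi fun s (hs : 0 < s) => ?_
  rw [← mul_sum, ← mul_sum]
  exact mul_le_mul_of_nonneg_left (sum_log_one_add_div_le_of_prod_add_le hx hy hs (h s hs))
    (rpow_nonneg hs.le _)

end LogKernel

theorem stmt_15_general (n : ℕ) (X Y : Matrix (Fin n) (Fin n) ℂ)
    (hX : X.PosDef) (hY : Y.PosDef)
    (hE : ∀ k, 1 ≤ k → k ≤ n →
      esymm n k hX.1.eigenvalues ≤ esymm n k hY.1.eigenvalues)
    (α : ℝ) (hα : 0 < α) (hα1 : α < 1) :
    ∑ i, (hX.1.eigenvalues i) ^ α ≤ ∑ i, (hY.1.eigenvalues i) ^ α :=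
  sum_rpow_le_sum_rpow_of_prod_add_le hα hα1 (fun i => (hX.eigenvalues_pos i).le)
    (fun i => (hY.eigenvalues_pos i).le) fun _ hs => prod_add_le_prod_add_of_esymm_le hE hs.le

theorem stmt_15 (n : ℕ) (X Y : Matrix (Fin n) (Fin n) ℂ)
    (hX : X.PosDef) (hY : Y.PosDef)
    (hXtr : X.trace = 1) (hYtr : Y.trace = 1)
    (hE : ∀ k, 1 ≤ k → k ≤ n →
      esymm n k hX.1.eigenvalues ≤ esymm n k hY.1.eigenvalues)
    (α : ℝ) (hα : 0 < α) (hα1 : α < 1) :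
    ∑ i, (hX.1.eigenvalues i) ^ α ≤ ∑ i, (hY.1.eigenvalues i) ^ α :=
  stmt_15_general n X Y hX hY hE α hα hα1
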